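/- For n ≥ 2 and s = [n], given that for the n-qubit W state and local Hamiltonians |1⟩⟨1| the ergotropic gap across the bipartition X|X^c with |X| = k (1 ≤ k ≤ n−1) equals 2·min(k/n, 1 − k/n), the ergotropic-gap concentratable entanglement satisfies M^{(s)}_E(|W_n⟩) = (1/2^n) Σ_{k=1}^{n−1} C(n,k) · 2·min(k/n, (n−k)/n) = 1 − (1/2^{n−1}) C(n−1, ⌊(n−1)/2⌋). -/

import Mathlib

/-!
Since `2 min(k, n - k) = n - |n - 2k|`, the claim is De Moivre's formula for the mean absolute
deviation of the binomial distribution, `∑ₖ C(n,k) |n - 2k| = 2n C(n-1, ⌊(n-1)/2⌋)`. The partial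
sums `∑_{k ≤ m} (n - 2k) C(n,k)` telescope to `n C(n-1, m)`; in particular the full sum vanishes,
and writing `|x| = 2 max(x, 0) - x` leaves only the partial sum up to `m = ⌊(n-1)/2⌋`.
-/

open Finset

section BinomialAbsoluteDeviation

variable {R : Type*}

lemma sum_range_succ_sub_two_mul_mul_choose [CommRing R] (n m : ℕ) :
    ∑ k ∈ range (m + 1), ((n + 1 : R) - 2 * k) * (n + 1).choose k = (n + 1) * n.choose m := by
  induction m with
  | zero => simp
  | succ m ih =>
    have hsucc := congrArg (Nat.cast (R := R)) (Nat.add_one_mul_choose_eq n m)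
    have hpascal : ((n + 1).choose (m + 1) : R) = n.choose m + n.choose (m + 1) := by
      rw [Nat.choose_succ_succ', Nat.cast_add]
    rw [sum_range_succ, ih]
    push_cast at hsucc ⊢
    linear_combination (2 : R) * hsucc + (n + 1 : R) * hpascal

variable [CommRing R] [LinearOrder R] [IsStrictOrderedRing R]

lemma sum_range_abs_sub_two_mul_mul_choose (n : ℕ) :
    ∑ k ∈ range (n + 2), |(n + 1 : R) - 2 * k| * (n + 1).choose k
      = 2 * (n + 1) * n.choose (n / 2) := by
  have hbalanced : ∑ k ∈ range (n + 2), ((n + 1 : R) - 2 * k) * (n + 1).choose k = 0 := by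
    simp [sum_range_succ_sub_two_mul_mul_choose]
  have hpositive : ∑ k ∈ range (n + 2), max ((n + 1 : R) - 2 * k) 0 * (n + 1).choose k
      = (n + 1) * n.choose (n / 2) := by
    rw [← sum_range_succ_sub_two_mul_mul_choose]
    refine (sum_subset_zero_on_sdiff (range_subset_range.2 (by omega)) (fun k hk => ?_)
      (fun k hk => ?_)).symm
    · have : n + 1 ≤ 2 * k := by simp only [mem_sdiff, mem_range] at hk; omega
      rw [max_eq_right (by rw [sub_nonpos]; exact_mod_cast this), zero_mul]
    · have : 2 * k ≤ n + 1 := by rw [mem_range] at hk; omega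
      rw [max_eq_left (by rw [sub_nonneg]; exact_mod_cast this)]
  have habs (a : R) : |a| = 2 * max a 0 - a := by
    rcases le_total a 0 with h | h
    · rw [abs_of_nonpos h, max_eq_right h]; ring
    · rw [abs_of_nonneg h, max_eq_left h]; ring
  rw [sum_congr rfl fun k _ => by rw [habs, sub_mul, mul_assoc], sum_sub_distrib, ← mul_sum,
    hpositive, hbalanced]
  ring

lemma sum_range_choose_mul_two_mul_min (n : ℕ) :
    ∑ k ∈ range (n + 2), ((n + 1).choose k : R) * (2 * min (k : R) (n + 1 - k))
      = (n + 1) * 2 ^ (n + 1) - 2 * (n + 1) * n.choose (n / 2) := by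
  have htwo_min (a b : R) : 2 * min a b = a + b - |b - a| := by
    rw [← two_nsmul_inf_eq_add_sub_abs_sub, two_nsmul, two_mul]
  have hsum_choose : ∑ k ∈ range (n + 2), ((n + 1).choose k : R) = 2 ^ (n + 1) := by
    exact_mod_cast Nat.sum_range_choose (n + 1)
  rw [← sum_range_abs_sub_two_mul_mul_choose, ← hsum_choose, mul_sum, ← sum_sub_distrib]
  refine sum_congr rfl fun k _ => ?_
  rw [htwo_min, show (n + 1 : R) - k - k = n + 1 - 2 * k by ring]
  ring

end BinomialAbsoluteDeviation

theorem stmt9_general (n : ℕ) :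
    (1 / 2 ^ n : ℝ) *
        ∑ k ∈ Finset.Icc 1 (n - 1),
          (n.choose k : ℝ) * (2 * min ((k : ℝ) / n) (((n : ℝ) - k) / n))
      = 1 - ((n - 1).choose ((n - 1) / 2) : ℝ) / 2 ^ (n - 1) := by
  rcases n with _ | n
  · simp
  have hinterior : ∑ k ∈ Icc 1 n, ((n + 1).choose k : ℝ) * (2 * min (k : ℝ) (n + 1 - k))
      = ∑ k ∈ range (n + 2), ((n + 1).choose k : ℝ) * (2 * min (k : ℝ) (n + 1 - k)) := by
    refine sum_subset (fun k hk => by simp only [mem_Icc, mem_range] at hk ⊢; omega) fun k hk hk' => ?_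
    obtain rfl | rfl : k = 0 ∨ k = n + 1 := by simp only [mem_Icc, mem_range] at hk hk'; omega
    all_goals simp [Nat.cast_add_one_pos n |>.le]
  have hpow : (2 : ℝ) ^ (n + 1) = 2 * 2 ^ n := pow_succ' 2 n
  simp only [Nat.add_sub_cancel, Nat.cast_add_one,
    min_div_div_right (by positivity : (0 : ℝ) ≤ n + 1), mul_div_assoc', ← sum_div, hinterior,
    sum_range_choose_mul_two_mul_min, hpow]
  field_simp

/-- W-state value: summing the gaps `2·min(k/n,(n−k)/n)` over bipartitions with
`|X| = k` (multiplicity `C(n,k)`) yields `1 − C(n−1,⌊(n−1)/2⌋)/2^{n−1}`. -/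
theorem stmt9 (n : ℕ) (hn : 2 ≤ n) :
    (1 / 2 ^ n : ℝ) *
        ∑ k ∈ Finset.Icc 1 (n - 1),
          (n.choose k : ℝ) * (2 * min ((k : ℝ) / n) (((n : ℝ) - k) / n))
      = 1 - ((n - 1).choose ((n - 1) / 2) : ℝ) / 2 ^ (n - 1) :=
  stmt9_general n
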